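/- Let (X,ρ,μ) be a quasi-metric measure space. Then (X,ρ,μ) satisfies the weak reverse doubling (WRD) condition if and only if there exist λ, C ∈ (1,∞) such that for every x ∈ X, liminf_{r→∞} μ(B(x,λr))/μ(B(x,r)) ≥ C. -/
import Mathlib


noncomputable section

open MeasureTheory Filter Set
open scoped ENNReal NNReal Topology

namespace Paper

variable {X : Type*} [MeasurableSpace X]

/-- The ball with center `x` and radius `r` for the quasi-metric `ρ`. -/
def ball (ρ : X → X → ℝ) (x : X) (r : ℝ) : Set X := {y | ρ x y < r}

/-- `(X, ρ, μ)` is a quasi-metric measure space with quasi-triangle constant `K₀`: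
`ρ` is a quasi-metric with constant `K₀` and all `ρ`-balls are `μ`-measurable. -/
structure IsQuasiMetricMeasure (ρ : X → X → ℝ) (μ : Measure X) (K₀ : ℝ) : Prop where
  nonneg : ∀ x y, 0 ≤ ρ x y
  eq_zero_iff : ∀ x y, ρ x y = 0 ↔ x = y
  symm : ∀ x y, ρ x y = ρ y x
  one_le : 1 ≤ K₀
  triangle : ∀ x y z, ρ x z ≤ K₀ * (ρ x y + ρ y z)
  measurableSet_ball : ∀ x r, MeasurableSet (ball ρ x r)

/-- The weak reverse doubling (WRD) condition. -/
def WRD (ρ : X → X → ℝ) (μ : Measure X) : Prop :=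
  ∃ (x₀ : X) (lam C : ℝ), 1 < lam ∧ 1 < C ∧
    ENNReal.ofReal C ≤
      liminf (fun r : ℝ => μ (ball ρ x₀ (lam * r)) / μ (ball ρ x₀ r)) atTop

theorem statement7 [Nonempty X] (ρ : X → X → ℝ) (μ : Measure X) (K₀ : ℝ)
    (hX : IsQuasiMetricMeasure ρ μ K₀) :
    WRD ρ μ ↔
      ∃ lam C : ℝ, 1 < lam ∧ 1 < C ∧ ∀ x : X,
        ENNReal.ofReal C ≤
          liminf (fun r : ℝ => μ (ball ρ x (lam * r)) / μ (ball ρ x r)) atTop := by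
  have hK₀ : (1:ℝ) ≤ K₀ := hX.one_le
  have hK₀pos : (0:ℝ) < K₀ := lt_of_lt_of_le one_pos hK₀
  constructor
  · rintro ⟨x₀, lam, C, hlam, hC, hlim⟩
    refine ⟨4 * K₀ ^ 2 * lam, C, ?_, hC, ?_⟩
    · nlinarith
    · intro x
      set F : ℝ → ℝ≥0∞ := fun s => μ (ball ρ x₀ (lam * s)) / μ (ball ρ x₀ s) with hF
      have hg : Tendsto (fun r : ℝ => 2 * K₀ * r) atTop atTop :=
        Tendsto.const_mul_atTop (by linarith) tendsto_id
      have h1 : liminf F atTop ≤ liminf (fun r => F (2 * K₀ * r)) atTop := by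
        rw [show (fun r => F (2 * K₀ * r)) = F ∘ (fun r : ℝ => 2 * K₀ * r) from rfl,
          liminf_comp]
        exact liminf_le_liminf_of_le hg
      refine hlim.trans (h1.trans (Filter.liminf_le_liminf ?_))
      filter_upwards [eventually_ge_atTop (ρ x₀ x)] with r hr
      have hsub1 : ball ρ x r ⊆ ball ρ x₀ (2 * K₀ * r) := by
        intro y hy
        have := hX.triangle x₀ x y
        simp only [ball, Set.mem_setOf_eq] at *
        nlinarith
      have hsub2 : ball ρ x₀ (lam * (2 * K₀ * r)) ⊆ ball ρ x (4 * K₀ ^ 2 * lam * r) := by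
        intro y hy
        have ht := hX.triangle x x₀ y
        have hs := hX.symm x x₀
        have h0 := hX.nonneg x₀ y
        have hr0 : 0 ≤ r := le_trans (hX.nonneg x₀ x) hr
        simp only [ball, Set.mem_setOf_eq] at *
        have hrpos : 0 < r := by
          rcases hr0.lt_or_eq with h | h
          · exact h
          · exfalso; rw [← h] at hy; simp at hy; linarith
        nlinarith [mul_le_mul_of_nonneg_left hy.le hK₀pos.le,
          mul_le_mul_of_nonneg_left hr hK₀pos.le,
          (by nlinarith [mul_pos hK₀pos hrpos,
            mul_nonneg (mul_nonneg (sub_nonneg.2 hlam.le) hK₀pos.le) (mul_nonneg hK₀pos.le hr0),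
            mul_nonneg (mul_nonneg (sub_nonneg.2 hK₀) hK₀pos.le) hr0] : K₀ * r < 2 * K₀ ^ 2 * lam * r)]
      exact ENNReal.div_le_div (measure_mono hsub2) (measure_mono hsub1)
  · rintro ⟨lam, C, hlam, hC, h⟩
    exact ⟨Classical.arbitrary X, lam, C, hlam, hC, h _⟩
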